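/- There exists an infinite binary word that is 7/3 power-free but contains infinitely many overlaps (subwords with period p and length > 2p). -/

import Mathlib

/-! Let `μ` be the Thue–Morse morphism and `w = 01 μ²(w)`. In an image `μ(x)`, a factor longer
than twice its period `p` forces `p` to be even (an odd shift would make `μ(x)` alternate) and then
halves to a factor of `x` with period `p / 2`. Applied twice inside `w = 01 μ²(w)`, this reduces
a `7/3`-power of `w` to one of about a quarter of the length, until a short period near the start
of `w` is reached; those are excluded by computation. Conversely `μ²` maps an overlap at position
`i` to one at `4i + 2`, and `w` starts with the overlap `(01011010)²0`. -/

/-- `u` has period `p`: u(i) = u(i+p) for all valid indices. -/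
def HasPeriod (u : List Bool) (p : ℕ) : Prop :=
  ∀ i, i + p < u.length → u.getD i false = u.getD (i + p) false

/-- The finite word `u` occurs in the infinite word `w` at position `i`. -/
def OccursAt (w : ℕ → Bool) (u : List Bool) (i : ℕ) : Prop :=
  ∀ j < u.length, u.getD j false = w (i + j)

def HasPeriodOn (x : ℕ → Bool) (a l p : ℕ) : Prop :=
  ∀ j, a ≤ j → j + p < a + l → x j = x (j + p)

namespace HasPeriodOn

variable {x : ℕ → Bool} {a l p : ℕ}

theorem mono {a' l' : ℕ} (h : HasPeriodOn x a l p) (ha : a ≤ a') (hl : a' + l' ≤ a + l) :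
    HasPeriodOn x a' l' p :=
  fun j hj hjl => h j (by omega) (by omega)

theorem shift_iff {s : ℕ} :
    HasPeriodOn (fun n => x (n + s)) a l p ↔ HasPeriodOn x (a + s) l p := by
  constructor
  · intro h j hj hjl
    obtain ⟨k, rfl⟩ := Nat.exists_eq_add_of_le hj
    convert h (a + k) (by omega) (by omega) using 2 <;> omega
  · intro h j hj hjl
    simpa only [Nat.add_right_comm j p s] using h (j + s) (by omega) (by omega)

end HasPeriodOn

theorem OccursAt.hasPeriodOn {x : ℕ → Bool} {u : List Bool} {i p : ℕ} (hocc : OccursAt x u i)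
    (hper : HasPeriod u p) : HasPeriodOn x i u.length p := by
  intro j hj hjl
  obtain ⟨k, rfl⟩ := Nat.exists_eq_add_of_le hj
  rw [← hocc k (by omega), hper k (by omega), hocc (k + p) (by omega), Nat.add_assoc]

def factor (x : ℕ → Bool) (i l : ℕ) : List Bool := (List.range l).map fun j => x (i + j)

theorem length_factor (x : ℕ → Bool) (i l : ℕ) : (factor x i l).length = l := by
  simp [factor]

theorem getD_factor {x : ℕ → Bool} {i l j : ℕ} (hj : j < l) :
    (factor x i l).getD j false = x (i + j) := by
  simp [factor, hj]

theorem occursAt_factor (x : ℕ → Bool) (i l : ℕ) : OccursAt x (factor x i l) i := by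
  intro j hj
  rw [length_factor] at hj
  exact getD_factor hj

theorem HasPeriodOn.hasPeriod_factor {x : ℕ → Bool} {i l p : ℕ} (h : HasPeriodOn x i l p) :
    HasPeriod (factor x i l) p := by
  intro j hj
  rw [length_factor] at hj
  rw [getD_factor (by omega), getD_factor hj, ← Nat.add_assoc]
  exact h _ (by omega) (by omega)

theorem eq_xor_of_alternating {y : ℕ → Bool} {a n : ℕ}
    (h : ∀ m, a ≤ m → m < a + n → y (m + 1) = !y m) :
    y (a + n) = xor (y a) (decide (n % 2 = 1)) := by
  induction n with
  | zero => simp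
  | succ n ih =>
    rw [← Nat.add_assoc, h _ (by omega) (by omega), ih fun m hm hmn => h m hm (by omega)]
    rcases Nat.mod_two_eq_zero_or_one n with hn | hn <;>
      simp [hn, Nat.succ_mod_two_eq_one_iff]

namespace ThueMorse

-- The Thue–Morse morphism `0 ↦ 01, 1 ↦ 10` on infinite words.
def mu (x : ℕ → Bool) (n : ℕ) : Bool := xor (x (n / 2)) (decide (n % 2 = 1))

@[simp] theorem mu_two_mul (x : ℕ → Bool) (k : ℕ) : mu x (2 * k) = x k := by
  simp [mu]

@[simp] theorem mu_two_mul_add_one (x : ℕ → Bool) (k : ℕ) : mu x (2 * k + 1) = !x k := by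
  rw [mu, show (2 * k + 1) / 2 = k by omega, show (2 * k + 1) % 2 = 1 by omega]
  simp

theorem mu_succ_of_even (x : ℕ → Bool) {m : ℕ} (hm : m % 2 = 0) : mu x (m + 1) = !mu x m := by
  obtain ⟨k, rfl⟩ : ∃ k, m = 2 * k := ⟨m / 2, by omega⟩
  simp

end ThueMorse

open ThueMorse

theorem HasPeriodOn.to_mu {x : ℕ → Bool} {a l p : ℕ} (h : HasPeriodOn x a l p) :
    HasPeriodOn (mu x) (2 * a) (2 * l) (2 * p) := by
  intro j hj hjl
  simp only [mu]
  rw [show (j + 2 * p) / 2 = j / 2 + p by omega, show (j + 2 * p) % 2 = j % 2 by omega,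
    h (j / 2) (by omega) (by omega)]

theorem HasPeriodOn.two_dvd_of_mu {x : ℕ → Bool} {a l p : ℕ} (h : HasPeriodOn (mu x) a l p)
    (hl : 2 * p < l) : 2 ∣ p := by
  by_contra hp
  replace hp : p % 2 = 1 := by omega
  -- An odd shift moves the pairs `(2k, 2k+1)` of `mu x` onto the pairs `(2k+1, 2k+2)`.
  have alternating : ∀ m, a ≤ m → m < a + p → mu x (m + 1) = !mu x m := by
    intro m hm hmp
    rcases Nat.mod_two_eq_zero_or_one m with he | ho
    · exact mu_succ_of_even x he
    · rw [h m hm (by omega), h (m + 1) (by omega) (by omega), Nat.add_right_comm,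
        mu_succ_of_even x (by omega)]
  have := eq_xor_of_alternating alternating
  rw [hp, ← h a le_rfl (by omega)] at this
  simp at this

theorem HasPeriodOn.of_mu_two_mul {x : ℕ → Bool} {a l q : ℕ}
    (h : HasPeriodOn (mu x) a l (2 * q)) (hl : 2 * q < l) :
    HasPeriodOn x (a / 2) ((l + 1) / 2) q := by
  intro n hn hnl
  rw [← mu_two_mul x n, ← mu_two_mul x (n + q), Nat.mul_add]
  rcases le_or_gt a (2 * n) with hle | hlt
  · exact h _ hle (by omega)
  · have ha : a = 2 * n + 1 := by omega
    have := h a le_rfl (by omega)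
    rwa [ha, Nat.add_right_comm, mu_succ_of_even x (by omega), mu_succ_of_even x (by omega),
      Bool.not_inj_iff] at this

theorem HasPeriodOn.exists_of_mu {x : ℕ → Bool} {a l p : ℕ} (h : HasPeriodOn (mu x) a l p)
    (hl : 2 * p < l) : ∃ q, p = 2 * q ∧ HasPeriodOn x (a / 2) ((l + 1) / 2) q := by
  obtain ⟨q, rfl⟩ := h.two_dvd_of_mu hl
  exact ⟨q, rfl, h.of_mu_two_mul (by omega)⟩

theorem HasPeriodOn.exists_of_mu_mu {x : ℕ → Bool} {a l p : ℕ}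
    (h : HasPeriodOn (mu (mu x)) a l p) (hl : 2 * p < l) :
    ∃ q, p = 4 * q ∧ HasPeriodOn x (a / 4) ((l + 3) / 4) q := by
  obtain ⟨q, rfl, hq⟩ := h.exists_of_mu hl
  obtain ⟨r, rfl, hr⟩ := hq.exists_of_mu (by omega)
  refine ⟨r, by ring, ?_⟩
  rwa [Nat.div_div_eq_div_mul, show (l + 1) / 2 + 1 = (l + 3) / 2 by omega,
    Nat.div_div_eq_div_mul] at hr

-- `overlapWord = 01 μ²(overlapWord)`; the fuel `f` makes the recursion structural, so that
-- `decide` can evaluate the word, and `overlapWordAux f n` is the letter `n` for all `f ≥ n`.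
def overlapWordAux : ℕ → ℕ → Bool
  | _, 0 => false
  | _, 1 => true
  | 0, _ => false
  | f + 1, n + 2 => mu (mu (overlapWordAux f)) n

def overlapWord (n : ℕ) : Bool := overlapWordAux n n

theorem overlapWordAux_congr {f g n : ℕ} (hf : n ≤ f) (hg : n ≤ g) :
    overlapWordAux f n = overlapWordAux g n := by
  induction f generalizing g n with
  | zero =>
    obtain rfl : n = 0 := by omega
    cases g <;> rfl
  | succ f ih =>
    match n, g, hg with
    | 0, g, _ => cases g <;> rfl
    | 1, g + 1, _ => rfl
    | n + 2, g + 1, hg =>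
      simp only [overlapWordAux, mu]
      rw [ih (g := g) (n := n / 2 / 2) (by omega) (by omega)]

theorem overlapWord_add_two : (fun n => overlapWord (n + 2)) = mu (mu overlapWord) := by
  funext n
  simp only [overlapWord, overlapWordAux, mu]
  rw [overlapWordAux_congr (by omega) le_rfl]

theorem overlapWord_hasPeriodOn_zero : HasPeriodOn overlapWord 0 17 8 := by
  have : ∀ j < 9, overlapWord j = overlapWord (j + 8) := by decide
  exact fun j _ hj => this j (by omega)

theorem overlapWord_short_periods :
    ∀ p ≤ 7, 1 ≤ p → ∀ a ≤ 1, ∃ j < 20, a ≤ j ∧ j + p < a + (7 * p + 1) / 3 ∧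
      overlapWord j ≠ overlapWord (j + p) := by
  decide

-- The slack `d` absorbs the at most two letters lost when a window starting at `0` or `1` is
-- cut down to start at `2`, where `overlapWord_add_two` applies; a descent step shrinks it
-- to `d / 4`.
theorem overlapWord_not_hasPeriodOn {l a p d : ℕ} (hp : 1 ≤ p) (hdp : d < p) (hd : d ≤ 7)
    (hstart : a ≤ 1 → d ≤ 1) (hlp : 7 * p ≤ 3 * l + d) :
    ¬ HasPeriodOn overlapWord a l p := by
  induction l using Nat.strong_induction_on generalizing a p d with
  | _ l ih =>
    intro h
    rcases le_or_gt a 1 with ha | ha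
    · rcases le_or_gt p 7 with hp7 | hp7
      · obtain ⟨j, -, haj, hjp, hne⟩ := overlapWord_short_periods p hp7 hp a ha
        exact hne (h j haj (by omega))
      · refine ih (l + a - 2) (by omega) (a := 2) (d := d + 6) hp (by omega) (by omega)
          (by omega) (by omega) (h.mono (by omega) (by omega))
    · obtain ⟨a, rfl⟩ : ∃ b, a = b + 2 := ⟨a - 2, by omega⟩
      rw [← HasPeriodOn.shift_iff, overlapWord_add_two] at h
      obtain ⟨q, rfl, hq⟩ := h.exists_of_mu_mu (by omega)
      exact ih ((l + 3) / 4) (by omega) (d := d / 4) (by omega) (by omega) (by omega)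
        (fun _ => by omega) (by omega) hq

theorem exists_overlap_ge (N : ℕ) :
    ∃ i ≥ N, ∃ l p, 1 ≤ p ∧ 2 * p < l ∧ HasPeriodOn overlapWord i l p := by
  induction N with
  | zero => exact ⟨0, le_rfl, 17, 8, by norm_num, by norm_num, overlapWord_hasPeriodOn_zero⟩
  | succ N ih =>
    obtain ⟨i, hi, l, p, hp, hlp, h⟩ := ih
    have h' := h.to_mu.to_mu
    rw [← overlapWord_add_two, HasPeriodOn.shift_iff] at h'
    exact ⟨2 * (2 * i) + 2, by omega, 2 * (2 * l), 2 * (2 * p), by omega, by omega, h'⟩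

theorem exists_73free_with_overlaps :
    ∃ w : ℕ → Bool,
      (∀ u p i, OccursAt w u i → 1 ≤ p → HasPeriod u p → 3 * u.length < 7 * p) ∧
      (∀ N, ∃ i ≥ N, ∃ u p, OccursAt w u i ∧ 1 ≤ p ∧ HasPeriod u p ∧ 2 * p < u.length) := by
  refine ⟨overlapWord, fun u p i hocc hp hper => ?_, fun N => ?_⟩
  · by_contra! hlong
    exact overlapWord_not_hasPeriodOn (d := 0) hp hp (by omega) (fun _ => by omega) (by omega)
      (hocc.hasPeriodOn hper)
  · obtain ⟨i, hi, l, p, hp, hlp, h⟩ := exists_overlap_ge N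
    exact ⟨i, hi, factor overlapWord i l, p, occursAt_factor _ _ _, hp, h.hasPeriod_factor,
      by rwa [length_factor]⟩
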